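/- Let Ψ : {0,1}^n × {0,1}^n → {A,T,C,G}^n be the coordinatewise bijection mapping (0,0)↦A, (0,1)↦T, (1,0)↦C, (1,1)↦G. If C₁ ⊆ {0,1}^n is a κ-weakly mutually uncorrelated code and C₂ ⊆ {0,1}^n is arbitrary, then C = { Ψ(a,b) : a ∈ C₁, b ∈ C₂ } is a κ-weakly mutually uncorrelated code. -/
import Mathlib


inductive DNA : Type
  | A | T | C | G
deriving DecidableEq

/-- The coordinatewise map Ψ with (0,0)↦A, (0,1)↦T, (1,0)↦C, (1,1)↦G. -/
def Psi {n : ℕ} (a b : Fin n → Bool) : Fin n → DNA := fun i =>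
  match a i, b i with
  | false, false => DNA.A
  | false, true  => DNA.T
  | true,  false => DNA.C
  | true,  true  => DNA.G

lemma Psi_inj_left {n : ℕ} {a b a' b' : Fin n → Bool} {i j : Fin n}
    (h : Psi a b i = Psi a' b' j) : a i = a' j := by
  unfold Psi at h
  rcases ha : a i <;> rcases hb : b i <;> rcases ha' : a' j <;> rcases hb' : b' j <;>
    simp_all

/-- If C₁ is κ-weakly mutually uncorrelated then {Ψ(a,b) : a ∈ C₁, b ∈ C₂} is a
κ-weakly mutually uncorrelated code. -/
theorem stmt_9 (n κ : ℕ) (hκ : 1 ≤ κ) (C₁ C₂ : Set (Fin n → Bool))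
    (h1 : ∀ a ∈ C₁, ∀ b ∈ C₁, ∀ (l : ℕ), κ ≤ l → ∀ (hl : l < n),
      ¬ ∀ (i : ℕ) (hi : i < l), a ⟨i, by omega⟩ = b ⟨n - l + i, by omega⟩)
    (C : Set (Fin n → DNA))
    (hC : C = {c | ∃ a ∈ C₁, ∃ b ∈ C₂, c = Psi a b}) :
    ∀ x ∈ C, ∀ y ∈ C, ∀ (l : ℕ), κ ≤ l → ∀ (hl : l < n),
      ¬ ∀ (i : ℕ) (hi : i < l), x ⟨i, by omega⟩ = y ⟨n - l + i, by omega⟩ := by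
  subst hC
  rintro x ⟨a, ha, b, hb, rfl⟩ y ⟨a', ha', b', hb', rfl⟩ l hκl hl H
  apply h1 a ha a' ha' l hκl hl
  intro i hi
  have := H i hi
  have := Psi_inj_left this
  exact this
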